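/- arXiv:2112.00326 — 2 statements merged into one kernel-verified Lean document; each statement's English description precedes it below -/
import Mathlib

section
/- Let E → B be a real vector bundle of finite rank over a compact Hausdorff space B, let A ⊆ C(B, ℝ) be a subalgebra that separates points of B and vanishes at no point of B, and let {s_j} be a family of continuous sections of E such that for every x ∈ B the vectors s_j(x) span the fibre E_x over ℝ. Then the A-submodule of continuous sections generated by the s_j is dense in the space of all continuous sections of E with the sup-norm (induced by a choice of bundle metric). -/
/-!
In a local trivialization, finitely many of the `z j` span the fibre at `b₀`, so the frame map
`c ↦ ∑ cᵢ • z (jᵢ) b` has a right inverse at `b₀`, hence a continuous family of right inverses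
near `b₀` (invertibility is open); this gives any continuous section continuous local
coefficients. A partition of unity glues them into `t = ∑ gᵢ • z (jᵢ)` with `gᵢ ∈ C(B, ℝ)`.
Replacing each `gᵢ` by a uniformly `δ`-close element of `A` (Stone–Weierstrass) moves the sum by
at most `δ * ∑ ‖z (jᵢ)‖`, which is bounded on the compact base.
-/

open Bundle Set

theorem Submodule.exists_fin_span_range_comp_eq_top {K M J : Type*} [DivisionRing K]
    [AddCommGroup M] [Module K M] [FiniteDimensional K M] {v : J → M}
    (hv : span K (range v) = ⊤) : ∃ (n : ℕ) (j : Fin n → J), span K (range (v ∘ j)) = ⊤ := by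
  obtain ⟨f, hf_mem, hf_span, -⟩ := exists_fun_fin_finrank_span_eq K (range v)
  choose j hj using hf_mem
  refine ⟨_, j, ?_⟩
  rwa [show v ∘ j = f from funext hj, hf_span]

section NormedSpace

variable {X 𝕜 E F : Type*} [TopologicalSpace X] [NontriviallyNormedField 𝕜]
  [NormedAddCommGroup E] [NormedSpace 𝕜 E] [NormedAddCommGroup F] [NormedSpace 𝕜 F]

theorem ContinuousOn.exists_continuousOn_rightInverse [CompleteSpace F]
    {T : X → E →L[𝕜] F} {U : Set X} (hT : ContinuousOn T U) (hU : IsOpen U) {x₀ : X}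
    (hx₀ : x₀ ∈ U) {S₀ : F →L[𝕜] E} (hS₀ : (T x₀).comp S₀ = .id 𝕜 F) :
    ∃ V ⊆ U, IsOpen V ∧ x₀ ∈ V ∧ ∃ R : X → F →L[𝕜] E,
      ContinuousOn R V ∧ ∀ x ∈ V, (T x).comp (R x) = .id 𝕜 F := by
  -- `G x₀ = 1`, so `G x` is a unit near `x₀` and `S₀ ∘ (G x)⁻¹` is a right inverse of `T x`.
  set G : X → F →L[𝕜] F := fun x => (T x).comp S₀
  have hG : ContinuousOn G U := hT.clm_comp continuousOn_const
  refine ⟨U ∩ G ⁻¹' {g : F →L[𝕜] F | IsUnit g}, inter_subset_left,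
    hG.isOpen_inter_preimage hU (Units.isOpen (R := F →L[𝕜] F)), ⟨hx₀, ?_⟩,
    fun x => S₀.comp (Ring.inverse (G x) : F →L[𝕜] F), ?_, ?_⟩
  · show IsUnit ((T x₀).comp S₀)
    rw [hS₀]
    exact isUnit_one
  · rintro x ⟨hxU, hx⟩
    have hinv : ContinuousAt Ring.inverse (G x) :=
      hx.unit_spec ▸ NormedRing.inverse_continuousAt hx.unit
    exact continuousWithinAt_const.clm_comp <|
      hinv.comp_continuousWithinAt ((hG x hxU).mono inter_subset_left)
  · rintro x ⟨-, hx⟩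
    exact Ring.mul_inverse_cancel (G x) hx

variable [CompleteSpace 𝕜] [FiniteDimensional 𝕜 F]

theorem exists_continuousOn_coeffs_of_span_eq_top {J : Type*} {w : J → X → F} {U : Set X}
    (hU : IsOpen U) (hw : ∀ j, ContinuousOn (w j) U) {x₀ : X} (hx₀ : x₀ ∈ U)
    (hspan : Submodule.span 𝕜 (range fun j => w j x₀) = ⊤) {y : X → F}
    (hy : ContinuousOn y U) :
    ∃ (n : ℕ) (j : Fin n → J) (V : Set X) (c : X → Fin n → 𝕜), V ⊆ U ∧ IsOpen V ∧ x₀ ∈ V ∧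
      ContinuousOn c V ∧ ∀ x ∈ V, ∑ i, c x i • w (j i) x = y x := by
  obtain ⟨n, j, hj_span⟩ := Submodule.exists_fin_span_range_comp_eq_top hspan
  let Φ : (Fin n → F) →L[𝕜] (Fin n → 𝕜) →L[𝕜] F :=
    (LinearMap.toContinuousLinearMap.toLinearMap ∘ₗ
      Fintype.bilinearCombination 𝕜 𝕜).toContinuousLinearMap
  set T : X → (Fin n → 𝕜) →L[𝕜] F := fun x => Φ fun i => w (j i) x
  have hT_apply : ∀ x c, T x c = ∑ i, c i • w (j i) x := fun _ _ => rfl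
  have hT : ContinuousOn T U :=
    Φ.continuous.comp_continuousOn (continuousOn_pi.2 fun i => hw (j i))
  have hT_surj : LinearMap.range (T x₀ : (Fin n → 𝕜) →ₗ[𝕜] F) = ⊤ :=
    (Fintype.range_linearCombination 𝕜 _).trans hj_span
  obtain ⟨S₀, hS₀⟩ := (T x₀ : (Fin n → 𝕜) →ₗ[𝕜] F).exists_rightInverse_of_surjective hT_surj
  have := FiniteDimensional.complete 𝕜 F
  obtain ⟨V, hVU, hV, hx₀V, R, hR, hTR⟩ := hT.exists_continuousOn_rightInverse hU hx₀
    (S₀ := LinearMap.toContinuousLinearMap S₀) (by ext1 v; exact LinearMap.congr_fun hS₀ v)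
  refine ⟨_, j, V, fun x => R x (y x), hVU, hV, hx₀V, hR.clm_apply (hy.mono hVU), fun x hx => ?_⟩
  rw [← hT_apply, ← ContinuousLinearMap.comp_apply, hTR x hx, ContinuousLinearMap.id_apply]

end NormedSpace

theorem norm_sum_smul_sub_sum_smul_le {ι 𝕜 V : Type*} [NormedField 𝕜]
    [SeminormedAddCommGroup V] [NormedSpace 𝕜 V] (s : Finset ι) {a g : ι → 𝕜} (v : ι → V)
    {δ : ℝ} (h : ∀ i ∈ s, ‖a i - g i‖ ≤ δ) :
    ‖∑ i ∈ s, a i • v i - ∑ i ∈ s, g i • v i‖ ≤ δ * ∑ i ∈ s, ‖v i‖ := by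
  rw [← Finset.sum_sub_distrib, Finset.mul_sum]
  refine (norm_sum_le _ _).trans (Finset.sum_le_sum fun i hi => ?_)
  rw [← sub_smul, norm_smul]
  exact mul_le_mul_of_nonneg_right (h i hi) (norm_nonneg _)

theorem PartitionOfUnity.sum_smul_eq_of_isSubordinate {ι X M : Type*} [Fintype ι]
    [TopologicalSpace X] [AddCommMonoid M] [Module ℝ M] {ρ : PartitionOfUnity ι X univ}
    {U : ι → Set X} (hρ : ρ.IsSubordinate U) {x : X} {f : ι → M} {m : M}
    (hf : ∀ i, x ∈ U i → f i = m) : ∑ i, ρ i x • f i = m := by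
  calc ∑ i, ρ i x • f i = ∑ i, ρ i x • m := Finset.sum_congr rfl fun i _ => by
        rcases eq_or_ne (ρ i x) 0 with h | h
        · simp [h]
        · rw [hf i (hρ i (subset_tsupport _ h))]
    _ = m := by
        rw [← Finset.sum_smul, ← finsum_eq_sum_of_fintype, ρ.sum_eq_one (mem_univ x), one_smul]

section VectorBundle

variable {B F : Type*} [TopologicalSpace B] [NormedAddCommGroup F] [NormedSpace ℝ F]
  {E : B → Type*} [∀ b, AddCommMonoid (E b)] [∀ b, Module ℝ (E b)]
  [∀ b, TopologicalSpace (E b)] [TopologicalSpace (TotalSpace F E)] [FiberBundle F E]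

theorem Bundle.Trivialization.continuousOn_continuousLinearMapAt_section
    (e : Trivialization F (π F E)) [e.IsLinear ℝ] {s : ∀ b, E b}
    (hs : Continuous fun b => (⟨b, s b⟩ : TotalSpace F E)) :
    ContinuousOn (fun b => e.continuousLinearMapAt ℝ b (s b)) e.baseSet := by
  refine (continuous_snd.comp_continuousOn
    (e.continuousOn.comp hs.continuousOn fun b hb => e.mem_source.2 hb)).congr fun b hb => ?_
  exact e.continuousLinearMapAt_apply_of_mem ℝ hb (s b)

variable [VectorBundle ℝ F E] [FiniteDimensional ℝ F] {J : Type*} {z : J → ∀ b, E b}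
  {t : ∀ b, E b}

theorem VectorBundle.exists_continuousOn_coeffs_of_span_eq_top
    (hz : ∀ j, Continuous fun b => (⟨b, z j b⟩ : TotalSpace F E))
    (ht : Continuous fun b => (⟨b, t b⟩ : TotalSpace F E)) {b₀ : B}
    (hspan : Submodule.span ℝ (range fun j => z j b₀) = ⊤) :
    ∃ (n : ℕ) (j : Fin n → J) (V : Set B) (c : B → Fin n → ℝ), IsOpen V ∧ b₀ ∈ V ∧
      ContinuousOn c V ∧ ∀ b ∈ V, ∑ i, c b i • z (j i) b = t b := by
  set e := trivializationAt F E b₀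
  have hb₀ : b₀ ∈ e.baseSet := FiberBundle.mem_baseSet_trivializationAt F E b₀
  have hspan' : Submodule.span ℝ (range fun j => e.continuousLinearMapAt ℝ b₀ (z j b₀)) = ⊤ := by
    let L := (e.continuousLinearEquivAt ℝ b₀ hb₀).toLinearEquiv
    have hL : (fun j => e.continuousLinearMapAt ℝ b₀ (z j b₀)) = L ∘ fun j => z j b₀ := by
      ext j
      simp [L, ← e.coe_continuousLinearEquivAt_eq hb₀]
    rw [hL, range_comp, Submodule.span_image_linearEquiv, hspan, Submodule.map_top,
      LinearEquiv.range]
  obtain ⟨n, j, V, c, hVe, hV, hb₀V, hc, hrep⟩ :=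
    _root_.exists_continuousOn_coeffs_of_span_eq_top e.open_baseSet
      (fun j => e.continuousOn_continuousLinearMapAt_section (hz j)) hb₀ hspan'
      (e.continuousOn_continuousLinearMapAt_section ht)
  refine ⟨n, j, V, c, hV, hb₀V, hc, fun b hb => ?_⟩
  apply (e.continuousLinearEquivAt ℝ b (hVe hb)).injective
  simpa [e.coe_continuousLinearEquivAt_eq (hVe hb)] using hrep b hb

theorem VectorBundle.exists_continuous_coeffs_of_span_eq_top [CompactSpace B] [T2Space B]
    (hz : ∀ j, Continuous fun b => (⟨b, z j b⟩ : TotalSpace F E))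
    (ht : Continuous fun b => (⟨b, t b⟩ : TotalSpace F E))
    (hspan : ∀ b, Submodule.span ℝ (range fun j => z j b) = ⊤) :
    ∃ (k : ℕ) (g : Fin k → C(B, ℝ)) (j : Fin k → J), ∀ b, ∑ i, g i b • z (j i) b = t b := by
  choose n j V c hV hbV hc hrep using fun b =>
    exists_continuousOn_coeffs_of_span_eq_top hz ht (hspan b)
  obtain ⟨I, hI⟩ := isCompact_univ.elim_finite_subcover V hV fun b _ => mem_iUnion.2 ⟨b, hbV b⟩
  obtain ⟨ρ, hρ⟩ := PartitionOfUnity.exists_isSubordinate isClosed_univ (fun i : I => V i)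
    (fun i => hV i) fun b _ => by simpa using hI (mem_univ b)
  let P := Σ i : I, Fin (n i)
  let g : P → C(B, ℝ) := fun p => ⟨fun b => (ρ p.1 b • c p.1 b) p.2, (continuous_apply p.2).comp
    (ρ.continuous_smul fun b hb => (hc p.1).continuousAt ((hV p.1).mem_nhds (hρ p.1 hb)))⟩
  have hsum : ∀ b, ∑ p : P, g p b • z (j p.1 p.2) b = t b := fun b => by
    rw [Fintype.sum_sigma]
    simp only [g, ContinuousMap.coe_mk, Pi.smul_apply, smul_eq_mul, mul_smul,
      ← Finset.smul_sum]
    exact ρ.sum_smul_eq_of_isSubordinate hρ fun i => hrep i b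
  let e := (Fintype.equivFin P).symm
  exact ⟨_, g ∘ e, fun i => j (e i).1 (e i).2,
    fun b => (e.sum_comp fun p => g p b • z (j p.1 p.2) b).trans (hsum b)⟩

end VectorBundle

theorem stoneWeierstrass_vectorBundle_general
    {B : Type*} [TopologicalSpace B] [CompactSpace B] [T2Space B]
    {F : Type*} [NormedAddCommGroup F] [NormedSpace ℝ F] [FiniteDimensional ℝ F]
    (E : B → Type*) [∀ b, NormedAddCommGroup (E b)] [∀ b, NormedSpace ℝ (E b)]
    [TopologicalSpace (TotalSpace F E)] [FiberBundle F E] [VectorBundle ℝ F E]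
    -- the fibrewise norms form a continuous bundle metric
    (hmetric : Continuous fun p : TotalSpace F E => ‖p.2‖)
    (A : Subalgebra ℝ C(B, ℝ))
    (hsep : ∀ x y : B, x ≠ y → ∃ h ∈ A, h x ≠ h y)
    {J : Type*} (z : J → ∀ b, E b)
    (hzcont : ∀ j, Continuous fun b => (⟨b, z j b⟩ : TotalSpace F E))
    (hspan : ∀ b, Submodule.span ℝ (Set.range fun j => z j b) = ⊤) :
    ∀ (t : ∀ b, E b), Continuous (fun b => (⟨b, t b⟩ : TotalSpace F E)) →
      ∀ ε : ℝ, 0 < ε →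
        ∃ (k : ℕ) (a : Fin k → C(B, ℝ)) (j : Fin k → J),
          (∀ i, a i ∈ A) ∧ ∀ b : B, ‖t b - ∑ i, a i b • z (j i) b‖ < ε := by
  intro t ht ε hε
  obtain ⟨k, g, j, hg⟩ := VectorBundle.exists_continuous_coeffs_of_span_eq_top hzcont ht hspan
  let N : C(B, ℝ) := ∑ i, ⟨fun b => ‖z (j i) b‖, hmetric.comp (hzcont (j i))⟩
  have hA : A.SeparatesPoints := fun x y hxy =>
    let ⟨h, hhA, hne⟩ := hsep x y hxy
    ⟨h, ⟨h, hhA, rfl⟩, hne⟩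
  have hδ : 0 < ε / (‖N‖ + 1) := by positivity
  choose a haA hag using fun i =>
    ContinuousMap.exists_mem_subalgebra_near_continuous_of_isCompact_of_separatesPoints
      hA (g i) isCompact_univ hδ
  refine ⟨k, a, j, haA, fun b => ?_⟩
  have hNb : ∑ i, ‖z (j i) b‖ ≤ ‖N‖ := by
    simpa [N] using (le_abs_self (N b)).trans (N.norm_coe_le_norm b)
  calc ‖t b - ∑ i, a i b • z (j i) b‖ = ‖∑ i, a i b • z (j i) b - ∑ i, g i b • z (j i) b‖ := by
        rw [← hg, norm_sub_rev]
    _ ≤ ε / (‖N‖ + 1) * ∑ i, ‖z (j i) b‖ :=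
        norm_sum_smul_sub_sum_smul_le _ _ fun i _ => (hag i b (mem_univ b)).le
    _ ≤ ε / (‖N‖ + 1) * ‖N‖ := by gcongr
    _ < ε := by
        rw [div_mul_eq_mul_div, div_lt_iff₀ (by positivity)]
        nlinarith

/-- **Stone–Weierstrass for vector bundles.**  Let `E → B` be a real vector bundle of finite
rank over a compact Hausdorff base, equipped with a bundle metric (here: norms on the fibres
varying continuously over the total space).  Let `A ⊆ C(B, ℝ)` be a subalgebra separating
points and vanishing at no point, and let `(z j)` be a family of continuous sections spanning
every fibre.  Then the `A`-module generated by the `z j` is dense in the space of continuous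
sections for the sup-norm. -/
theorem stoneWeierstrass_vectorBundle
    {B : Type*} [TopologicalSpace B] [CompactSpace B] [T2Space B]
    {F : Type*} [NormedAddCommGroup F] [NormedSpace ℝ F] [FiniteDimensional ℝ F]
    (E : B → Type*) [∀ b, NormedAddCommGroup (E b)] [∀ b, NormedSpace ℝ (E b)]
    [TopologicalSpace (TotalSpace F E)] [FiberBundle F E] [VectorBundle ℝ F E]
    -- the fibrewise norms form a continuous bundle metric
    (hmetric : Continuous fun p : TotalSpace F E => ‖p.2‖)
    (A : Subalgebra ℝ C(B, ℝ))
    (hsep : ∀ x y : B, x ≠ y → ∃ h ∈ A, h x ≠ h y)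
    (hnonvanish : ∀ x : B, ∃ h ∈ A, h x ≠ 0)
    {J : Type*} (z : J → ∀ b, E b)
    (hzcont : ∀ j, Continuous fun b => (⟨b, z j b⟩ : TotalSpace F E))
    (hspan : ∀ b, Submodule.span ℝ (Set.range fun j => z j b) = ⊤) :
    ∀ (t : ∀ b, E b), Continuous (fun b => (⟨b, t b⟩ : TotalSpace F E)) →
      ∀ ε : ℝ, 0 < ε →
        ∃ (k : ℕ) (a : Fin k → C(B, ℝ)) (j : Fin k → J),
          (∀ i, a i ∈ A) ∧ ∀ b : B, ‖t b - ∑ i, a i b • z (j i) b‖ < ε :=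
  stoneWeierstrass_vectorBundle_general E hmetric A hsep z hzcont hspan
end

section
/- Consider a second-quadrant homologically indexed spectral sequence E^1_{s,t} (s ≤ −1, t ≥ 0) with differentials d^r of bidegree (−r, r−1), converging to groups H_{s+t}. Suppose a morphism of spectral sequences f : E → E' is an isomorphism on E^1_{s,t} for all −N−1 ≤ s ≤ −1 and all t, that E^1_{s,t} = E'^1_{s,t} = 0 for s ≤ −N−3, and that E^1_{−N−2,t} = E'^1_{−N−2,t} = 0 for t < (N+1)·e with e ≥ 2. Then the induced map on abutments H_k → H'_k is an isomorphism for k < N(e−1) + e − 2. -/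
section ZeemanAux

variable {A B C A' B' C' X X' : Type*}
  [AddCommGroup A] [AddCommGroup B] [AddCommGroup C]
  [AddCommGroup A'] [AddCommGroup B'] [AddCommGroup C']
  [AddCommGroup X] [AddCommGroup X']

theorem zeeman_homology_subsingleton (d1 : A →+ B) (d2 : B →+ C) (h : Subsingleton B) :
    Subsingleton (↥d2.ker ⧸ (d1.range.addSubgroupOf d2.ker)) := by
  refine ⟨fun a b => ?_⟩
  induction a using QuotientAddGroup.induction_on with | H a =>
  induction b using QuotientAddGroup.induction_on with | H b =>
  exact congrArg _ (Subtype.ext (Subsingleton.elim _ _))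

theorem zeeman_homology_inj
    (d1 : A →+ B) (d2 : B →+ C) (d1' : A' →+ B') (d2' : B' →+ C')
    (fA : A →+ A') (fB : B →+ B') (fC : C →+ C')
    (h1 : ∀ a, fB (d1 a) = d1' (fA a)) (h2 : ∀ b, fC (d2 b) = d2' (fB b))
    (φ : (↥d2.ker ⧸ (d1.range.addSubgroupOf d2.ker)) ≃+ X)
    (φ' : (↥d2'.ker ⧸ (d1'.range.addSubgroupOf d2'.ker)) ≃+ X')
    (F : X →+ X')
    (hF : ∀ (b : B) (hb : b ∈ d2.ker) (hfb : fB b ∈ d2'.ker),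
      F (φ (QuotientAddGroup.mk ⟨b, hb⟩)) = φ' (QuotientAddGroup.mk ⟨fB b, hfb⟩))
    (hBinj : Function.Injective fB) (hAsurj : Function.Surjective fA) :
    Function.Injective F := by
  rw [injective_iff_map_eq_zero]
  intro x hx
  obtain ⟨q, rfl⟩ : ∃ q, φ q = x := ⟨φ.symm x, by simp⟩
  induction q using QuotientAddGroup.induction_on with | H z =>
  obtain ⟨b, hb⟩ := z
  have hfb : fB b ∈ d2'.ker := by
    have : d2 b = 0 := hb
    simp [AddMonoidHom.mem_ker, ← h2, this]
  rw [hF b hb hfb] at hx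
  have h0 : (QuotientAddGroup.mk ⟨fB b, hfb⟩ :
      ↥d2'.ker ⧸ (d1'.range.addSubgroupOf d2'.ker)) = 0 := by
    apply φ'.injective; simpa using hx
  rw [QuotientAddGroup.eq_zero_iff] at h0
  rw [AddSubgroup.mem_addSubgroupOf] at h0
  obtain ⟨a', ha'⟩ := h0
  obtain ⟨a, rfl⟩ := hAsurj a'
  have : d1 a = b := hBinj (by rw [h1]; exact ha')
  have hmem : (⟨b, hb⟩ : ↥d2.ker) ∈ d1.range.addSubgroupOf d2.ker := by
    rw [AddSubgroup.mem_addSubgroupOf]; exact ⟨a, this⟩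
  rw [show (QuotientAddGroup.mk ⟨b, hb⟩ :
      ↥d2.ker ⧸ (d1.range.addSubgroupOf d2.ker)) = 0 from
    (QuotientAddGroup.eq_zero_iff _).2 hmem]
  exact map_zero φ

theorem zeeman_homology_surj
    (d1 : A →+ B) (d2 : B →+ C) (d1' : A' →+ B') (d2' : B' →+ C')
    (fA : A →+ A') (fB : B →+ B') (fC : C →+ C')
    (h1 : ∀ a, fB (d1 a) = d1' (fA a)) (h2 : ∀ b, fC (d2 b) = d2' (fB b))
    (φ : (↥d2.ker ⧸ (d1.range.addSubgroupOf d2.ker)) ≃+ X)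
    (φ' : (↥d2'.ker ⧸ (d1'.range.addSubgroupOf d2'.ker)) ≃+ X')
    (F : X →+ X')
    (hF : ∀ (b : B) (hb : b ∈ d2.ker) (hfb : fB b ∈ d2'.ker),
      F (φ (QuotientAddGroup.mk ⟨b, hb⟩)) = φ' (QuotientAddGroup.mk ⟨fB b, hfb⟩))
    (hBsurj : Function.Surjective fB) (hCinj : Function.Injective fC) :
    Function.Surjective F := by
  intro x'
  obtain ⟨q', rfl⟩ : ∃ q', φ' q' = x' := ⟨φ'.symm x', by simp⟩
  induction q' using QuotientAddGroup.induction_on with | H z =>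
  obtain ⟨b', hb'⟩ := z
  obtain ⟨b, rfl⟩ := hBsurj b'
  have hb : b ∈ d2.ker := by
    have : d2' (fB b) = 0 := hb'
    have h0 : fC (d2 b) = fC 0 := by rw [h2, this, map_zero]
    exact hCinj h0
  exact ⟨φ (QuotientAddGroup.mk ⟨b, hb⟩), hF b hb hb'⟩

end ZeemanAux



/-- **Comparison of second-quadrant spectral sequences (Zeeman-style).**
Two homologically indexed second-quadrant spectral sequences `E, E'` (pages `E r s t`, with
differentials `d^r` of bidegree `(−r, r−1)` and `E^{r+1} = ker d^r / im d^r`, witnessed by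
the chosen isomorphisms `pageIso`), converging to abutments `H, H'` via exhaustive, separated
filtrations `Fil, Fil'` whose graded pieces are identified (by `gradIso`) with the stable
page `E^{N+3}` (in this situation all differentials into or out of any fixed spot vanish
from page `N+3` on, so `E^{N+3} = E^∞`).  Suppose given a morphism `f` of spectral sequences,
compatible with the differentials, with the page structure, and with a map `g` of the
abutments.  Assume:
* both `E¹`-pages vanish outside the second quadrant `s ≤ −1`, `t ≥ 0`;
* both vanish for `s ≤ −N−3`;
* both vanish in the column `s = −N−2` for `t < (N+1)·e`, where `e ≥ 2`;
* `f` is an isomorphism on `E¹_{s,t}` for all `−N−1 ≤ s ≤ −1` and all `t`.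
Then `g : H_k → H'_k` is an isomorphism for all `k < N(e−1) + e − 2`. -/
theorem spectral_sequence_comparison
    (N e : ℕ) (he : 2 ≤ e)
    -- the two spectral sequences
    (E E' : ℕ → ℤ → ℤ → Type*)
    [∀ r s t, AddCommGroup (E r s t)] [∀ r s t, AddCommGroup (E' r s t)]
    (d : ∀ (r : ℕ) (s t : ℤ), E r s t →+ E r (s - r) (t + r - 1))
    (d' : ∀ (r : ℕ) (s t : ℤ), E' r s t →+ E' r (s - r) (t + r - 1))
    (hdd : ∀ r s t (x : E r s t), d r (s - r) (t + r - 1) (d r s t x) = 0)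
    (hdd' : ∀ r s t (x : E' r s t), d' r (s - r) (t + r - 1) (d' r s t x) = 0)
    -- each page is the homology of the previous one
    (pageIso : ∀ (r : ℕ) (s t : ℤ),
      (↥(AddMonoidHom.ker (d r (s - r) (t + r - 1))) ⧸
        (AddMonoidHom.range (d r s t)).addSubgroupOf
          (AddMonoidHom.ker (d r (s - r) (t + r - 1)))) ≃+ E (r + 1) (s - r) (t + r - 1))
    (pageIso' : ∀ (r : ℕ) (s t : ℤ),
      (↥(AddMonoidHom.ker (d' r (s - r) (t + r - 1))) ⧸
        (AddMonoidHom.range (d' r s t)).addSubgroupOf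
          (AddMonoidHom.ker (d' r (s - r) (t + r - 1)))) ≃+ E' (r + 1) (s - r) (t + r - 1))
    -- the morphism of spectral sequences
    (f : ∀ (r : ℕ) (s t : ℤ), E r s t →+ E' r s t)
    (hfd : ∀ r s t (x : E r s t),
      f r (s - r) (t + r - 1) (d r s t x) = d' r s t (f r s t x))
    (hfpage : ∀ (r : ℕ) (s t : ℤ) (x : E r (s - r) (t + r - 1))
      (hx : x ∈ AddMonoidHom.ker (d r (s - r) (t + r - 1)))
      (hfx : f r (s - r) (t + r - 1) x ∈ AddMonoidHom.ker (d' r (s - r) (t + r - 1))),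
      f (r + 1) (s - r) (t + r - 1) (pageIso r s t (QuotientAddGroup.mk ⟨x, hx⟩)) =
        pageIso' r s t (QuotientAddGroup.mk ⟨f r (s - r) (t + r - 1) x, hfx⟩))
    -- the abutments, their filtrations, and convergence
    (H H' : ℤ → Type*) [∀ k, AddCommGroup (H k)] [∀ k, AddCommGroup (H' k)]
    (Fil : ℤ → ∀ k : ℤ, AddSubgroup (H k)) (Fil' : ℤ → ∀ k : ℤ, AddSubgroup (H' k))
    (hFmono : ∀ s k, Fil s k ≤ Fil (s + 1) k) (hFmono' : ∀ s k, Fil' s k ≤ Fil' (s + 1) k)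
    (hFexh : ∀ k, (⨆ s : ℤ, Fil s k) = ⊤) (hFexh' : ∀ k, (⨆ s : ℤ, Fil' s k) = ⊤)
    (hFsep : ∀ k, (⨅ s : ℤ, Fil s k) = ⊥) (hFsep' : ∀ k, (⨅ s : ℤ, Fil' s k) = ⊥)
    (gradIso : ∀ s k : ℤ,
      (↥(Fil s k) ⧸ (Fil (s - 1) k).addSubgroupOf (Fil s k)) ≃+ E (N + 3) s (k - s))
    (gradIso' : ∀ s k : ℤ,
      (↥(Fil' s k) ⧸ (Fil' (s - 1) k).addSubgroupOf (Fil' s k)) ≃+ E' (N + 3) s (k - s))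
    -- the map of abutments, compatible with `f`
    (g : ∀ k : ℤ, H k →+ H' k)
    (hgF : ∀ (s k : ℤ) (x : H k), x ∈ Fil s k → g k x ∈ Fil' s k)
    (hgrad : ∀ (s k : ℤ) (x : H k) (hx : x ∈ Fil s k) (hgx : g k x ∈ Fil' s k),
      f (N + 3) s (k - s) (gradIso s k (QuotientAddGroup.mk ⟨x, hx⟩)) =
        gradIso' s k (QuotientAddGroup.mk ⟨g k x, hgx⟩))
    -- vanishing conditions on the first pages
    (hquad : ∀ s t : ℤ, (-1 < s ∨ t < 0) → Subsingleton (E 1 s t))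
    (hquad' : ∀ s t : ℤ, (-1 < s ∨ t < 0) → Subsingleton (E' 1 s t))
    (hvan : ∀ s t : ℤ, s ≤ -(N : ℤ) - 3 → Subsingleton (E 1 s t))
    (hvan' : ∀ s t : ℤ, s ≤ -(N : ℤ) - 3 → Subsingleton (E' 1 s t))
    (hcol : ∀ t : ℤ, t < ((N : ℤ) + 1) * e → Subsingleton (E 1 (-(N : ℤ) - 2) t))
    (hcol' : ∀ t : ℤ, t < ((N : ℤ) + 1) * e → Subsingleton (E' 1 (-(N : ℤ) - 2) t))
    -- `f` is an isomorphism on the first page in the columns `−N−1 ≤ s ≤ −1`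
    (hiso1 : ∀ s t : ℤ, -(N : ℤ) - 1 ≤ s → s ≤ -1 → Function.Bijective (f 1 s t)) :
    ∀ k : ℤ, k < (N : ℤ) * (e - 1) + e - 2 → Function.Bijective (g k) := by
  obtain ⟨M, hM⟩ : ∃ M : ℤ, M = ((N : ℤ) + 1) * e := ⟨_, rfl⟩
  rw [← hM] at hcol hcol'
  -- subsingleton region propagates through pages
  have hsub : ∀ r : ℕ, 1 ≤ r → ∀ s t : ℤ,
      ((-1 < s ∨ t < 0) ∨ s ≤ -(N : ℤ) - 3 ∨ (s = -(N : ℤ) - 2 ∧ t < M)) →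
      Subsingleton (E r s t) ∧ Subsingleton (E' r s t) := by
    intro r hr
    induction r, hr using Nat.le_induction with
    | base =>
      intro s t ht
      rcases ht with h | h | ⟨h1, h2⟩
      · exact ⟨hquad s t h, hquad' s t h⟩
      · exact ⟨hvan s t h, hvan' s t h⟩
      · subst h1; exact ⟨hcol t h2, hcol' t h2⟩
    | succ r hr ih =>
      intro s t ht
      obtain ⟨σ, rfl⟩ : ∃ σ, s = σ - (r : ℤ) := ⟨s + r, by ring⟩
      obtain ⟨τ, rfl⟩ : ∃ τ, t = τ + (r : ℤ) - 1 := ⟨t - r + 1, by ring⟩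
      obtain ⟨hE, hE'⟩ := ih _ _ ht
      constructor
      · haveI := zeeman_homology_subsingleton (d r σ τ) (d r (σ - r) (τ + r - 1)) hE
        exact (pageIso r σ τ).symm.toEquiv.subsingleton
      · haveI := zeeman_homology_subsingleton (d' r σ τ) (d' r (σ - r) (τ + r - 1)) hE'
        exact (pageIso' r σ τ).symm.toEquiv.subsingleton
  -- the Zeeman zig-zag: injectivity / surjectivity ranges on every page
  have key : ∀ r : ℕ, 1 ≤ r → ∀ s t : ℤ,
      ((-(N : ℤ) - 1 ≤ s ∧ s ≤ -1 ∧ t ≤ M - s - N - 3) → Function.Injective (f r s t)) ∧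
      ((-(N : ℤ) - 1 ≤ s ∧ s ≤ -1 ∧ t ≤ M - s - N - 2) → Function.Surjective (f r s t)) := by
    intro r hr
    induction r, hr using Nat.le_induction with
    | base =>
      intro s t
      exact ⟨fun h => (hiso1 s t h.1 h.2.1).1, fun h => (hiso1 s t h.1 h.2.1).2⟩
    | succ r hr ih =>
      intro s t
      obtain ⟨σ, rfl⟩ : ∃ σ, s = σ - (r : ℤ) := ⟨s + r, by ring⟩
      obtain ⟨τ, rfl⟩ : ∃ τ, t = τ + (r : ℤ) - 1 := ⟨t - r + 1, by ring⟩
      constructor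
      · rintro ⟨h1, h2, h3⟩
        refine zeeman_homology_inj (d r σ τ) (d r (σ - r) (τ + r - 1))
          (d' r σ τ) (d' r (σ - r) (τ + r - 1))
          (f r σ τ) (f r (σ - r) (τ + r - 1)) (f r (σ - r - r) (τ + r - 1 + r - 1))
          (fun a => hfd r σ τ a) (fun b => hfd r (σ - r) (τ + r - 1) b)
          (pageIso r σ τ) (pageIso' r σ τ) _ (hfpage r σ τ)
          ((ih (σ - r) (τ + r - 1)).1 ⟨h1, h2, h3⟩) ?_
        by_cases hσ : σ ≤ -1
        · exact (ih σ τ).2 ⟨by omega, hσ, by omega⟩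
        · haveI := (hsub r hr σ τ (Or.inl (Or.inl (by omega)))).2
          exact fun y => ⟨0, Subsingleton.elim _ _⟩
      · rintro ⟨h1, h2, h3⟩
        refine zeeman_homology_surj (d r σ τ) (d r (σ - r) (τ + r - 1))
          (d' r σ τ) (d' r (σ - r) (τ + r - 1))
          (f r σ τ) (f r (σ - r) (τ + r - 1)) (f r (σ - r - r) (τ + r - 1 + r - 1))
          (fun a => hfd r σ τ a) (fun b => hfd r (σ - r) (τ + r - 1) b)
          (pageIso r σ τ) (pageIso' r σ τ) _ (hfpage r σ τ)
          ((ih (σ - r) (τ + r - 1)).2 ⟨h1, h2, h3⟩) ?_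
        by_cases hc : -(N : ℤ) - 1 ≤ σ - r - r
        · exact (ih (σ - r - r) (τ + r - 1 + r - 1)).1 ⟨hc, by omega, by omega⟩
        · have hE : Subsingleton (E r (σ - r - r) (τ + r - 1 + r - 1)) := by
            refine (hsub r hr (σ - r - r) (τ + r - 1 + r - 1) ?_).1
            by_cases h22 : σ - (r : ℤ) - r = -(N : ℤ) - 2
            · exact Or.inr (Or.inr ⟨h22, by omega⟩)
            · exact Or.inr (Or.inl (by omega))
          exact fun a b _ => Subsingleton.elim a b
  have bij3 : ∀ s t : ℤ, -(N : ℤ) - 1 ≤ s → s ≤ -1 → t ≤ M - s - N - 3 →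
      Function.Bijective (f (N + 3) s t) := by
    intro s t h1 h2 h3
    exact ⟨(key (N + 3) (by omega) s t).1 ⟨h1, h2, h3⟩,
           (key (N + 3) (by omega) s t).2 ⟨h1, h2, by omega⟩⟩
  intro k hk
  have hk' : k + (N : ℤ) + 3 ≤ M := by
    have hMe : M = (N : ℤ) * ((e : ℤ) - 1) + e + N := by rw [hM]; ring
    omega
  -- graded pieces are trivial outside -N-1 ≤ s ≤ -1
  have gsubE : ∀ s : ℤ, s ≤ -(N : ℤ) - 2 ∨ -1 < s →
      Subsingleton (E (N + 3) s (k - s)) ∧ Subsingleton (E' (N + 3) s (k - s)) := by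
    intro s hs
    apply hsub (N + 3) (by omega)
    rcases hs with hs | hs
    · rcases eq_or_lt_of_le hs with h | h
      · exact Or.inr (Or.inr ⟨h, by omega⟩)
      · exact Or.inr (Or.inl (by omega))
    · exact Or.inl (Or.inl hs)
  have collapse : ∀ s : ℤ, Subsingleton (E (N + 3) s (k - s)) → Fil s k ≤ Fil (s - 1) k := by
    intro s hs x hx
    haveI := hs
    haveI : Subsingleton (↥(Fil s k) ⧸ (Fil (s - 1) k).addSubgroupOf (Fil s k)) :=
      (gradIso s k).toEquiv.subsingleton
    have h0 : (QuotientAddGroup.mk ⟨x, hx⟩ :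
        ↥(Fil s k) ⧸ (Fil (s - 1) k).addSubgroupOf (Fil s k)) = 0 := Subsingleton.elim _ _
    rw [QuotientAddGroup.eq_zero_iff, AddSubgroup.mem_addSubgroupOf] at h0
    exact h0
  have collapse' : ∀ s : ℤ, Subsingleton (E' (N + 3) s (k - s)) → Fil' s k ≤ Fil' (s - 1) k := by
    intro s hs x hx
    haveI := hs
    haveI : Subsingleton (↥(Fil' s k) ⧸ (Fil' (s - 1) k).addSubgroupOf (Fil' s k)) :=
      (gradIso' s k).toEquiv.subsingleton
    have h0 : (QuotientAddGroup.mk ⟨x, hx⟩ :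
        ↥(Fil' s k) ⧸ (Fil' (s - 1) k).addSubgroupOf (Fil' s k)) = 0 := Subsingleton.elim _ _
    rw [QuotientAddGroup.eq_zero_iff, AddSubgroup.mem_addSubgroupOf] at h0
    exact h0
  have mono : ∀ a b : ℤ, a ≤ b → Fil a k ≤ Fil b k := by
    intro a
    exact Int.le_induction le_rfl (fun n _ ih => ih.trans (hFmono n k))
  have mono' : ∀ a b : ℤ, a ≤ b → Fil' a k ≤ Fil' b k := by
    intro a
    exact Int.le_induction le_rfl (fun n _ ih => ih.trans (hFmono' n k))
  have desc : ∀ s : ℤ, -1 ≤ s → Fil s k ≤ Fil (-1) k := by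
    refine Int.le_induction le_rfl ?_
    intro s hs ih
    ·
      have h := collapse (s + 1) (gsubE (s + 1) (Or.inr (by omega))).1
      simp only [add_sub_cancel_right] at h
      exact h.trans ih
  have desc' : ∀ s : ℤ, -1 ≤ s → Fil' s k ≤ Fil' (-1) k := by
    refine Int.le_induction le_rfl ?_
    intro s hs ih
    ·
      have h := collapse' (s + 1) (gsubE (s + 1) (Or.inr (by omega))).2
      simp only [add_sub_cancel_right] at h
      exact h.trans ih
  have top : Fil (-1) k = ⊤ := by
    rw [← hFexh k]
    refine le_antisymm (le_iSup (fun s => Fil s k) (-1)) (iSup_le fun s => ?_)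
    by_cases hs : s ≤ -1
    · exact mono s (-1) hs
    · exact desc s (by omega)
  have top' : Fil' (-1) k = ⊤ := by
    rw [← hFexh' k]
    refine le_antisymm (le_iSup (fun s => Fil' s k) (-1)) (iSup_le fun s => ?_)
    by_cases hs : s ≤ -1
    · exact mono' s (-1) hs
    · exact desc' s (by omega)
  have low : ∀ (n : ℕ) (s : ℤ), s = -(N : ℤ) - 2 - n → Fil (-(N : ℤ) - 2) k ≤ Fil s k := by
    intro n
    induction n with
    | zero => intro s hs; rw [hs]; simp
    | succ n ih =>
      intro s hs
      have h1 : Fil (-(N : ℤ) - 2) k ≤ Fil (-(N : ℤ) - 2 - n) k := ih _ rfl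
      have h2 := collapse (-(N : ℤ) - 2 - n) (gsubE _ (Or.inl (by omega))).1
      have hss : s = (-(N : ℤ) - 2 - n) - 1 := by rw [hs]; push_cast; ring
      rw [hss]; exact h1.trans h2
  have low' : ∀ (n : ℕ) (s : ℤ), s = -(N : ℤ) - 2 - n → Fil' (-(N : ℤ) - 2) k ≤ Fil' s k := by
    intro n
    induction n with
    | zero => intro s hs; rw [hs]; simp
    | succ n ih =>
      intro s hs
      have h1 : Fil' (-(N : ℤ) - 2) k ≤ Fil' (-(N : ℤ) - 2 - n) k := ih _ rfl
      have h2 := collapse' (-(N : ℤ) - 2 - n) (gsubE _ (Or.inl (by omega))).2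
      have hss : s = (-(N : ℤ) - 2 - n) - 1 := by rw [hs]; push_cast; ring
      rw [hss]; exact h1.trans h2
  have bot : Fil (-(N : ℤ) - 2) k = ⊥ := by
    rw [← hFsep k]
    refine le_antisymm (le_iInf fun s => ?_) (iInf_le _ _)
    by_cases hs : -(N : ℤ) - 2 ≤ s
    · exact mono _ _ hs
    · exact low (-(N : ℤ) - 2 - s).toNat s (by omega)
  have bot' : Fil' (-(N : ℤ) - 2) k = ⊥ := by
    rw [← hFsep' k]
    refine le_antisymm (le_iInf fun s => ?_) (iInf_le _ _)
    by_cases hs : -(N : ℤ) - 2 ≤ s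
    · exact mono' _ _ hs
    · exact low' (-(N : ℤ) - 2 - s).toNat s (by omega)
  -- five-lemma style induction over the filtration
  have main : ∀ s : ℤ, -(N : ℤ) - 2 ≤ s → s ≤ -1 →
      (∀ x ∈ Fil s k, g k x = 0 → x = 0) ∧
      (∀ y ∈ Fil' s k, ∃ x ∈ Fil s k, g k x = y) := by
    refine Int.le_induction ?_ ?_
    ·
      intro _
      constructor
      · intro x hx _
        rw [bot] at hx; simpa using hx
      · intro y hy
        rw [bot'] at hy
        refine ⟨0, (Fil _ k).zero_mem, ?_⟩
        simp only [AddSubgroup.mem_bot] at hy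
        rw [hy]; exact map_zero _
    · intro s hs ih hs1
      obtain ⟨ihinj, ihsurj⟩ := ih (by omega)
      have hbij := bij3 (s + 1) (k - (s + 1)) (by omega) hs1 (by omega)
      constructor
      · intro x hx hgx
        have hgx' : g k x ∈ Fil' (s + 1) k := hgF _ _ _ hx
        have hmem : (⟨g k x, hgx'⟩ : ↥(Fil' (s + 1) k)) ∈
            (Fil' (s + 1 - 1) k).addSubgroupOf (Fil' (s + 1) k) := by
          rw [AddSubgroup.mem_addSubgroupOf]
          show g k x ∈ Fil' (s + 1 - 1) k
          rw [hgx]; exact zero_mem _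
        have hq0 : f (N + 3) (s + 1) (k - (s + 1))
            (gradIso (s + 1) k (QuotientAddGroup.mk ⟨x, hx⟩)) = 0 := by
          rw [hgrad (s + 1) k x hx hgx', (QuotientAddGroup.eq_zero_iff _).2 hmem, map_zero]
        have hz : gradIso (s + 1) k (QuotientAddGroup.mk ⟨x, hx⟩) = 0 := by
          apply hbij.1; rw [hq0, map_zero]
        have hxm : (QuotientAddGroup.mk ⟨x, hx⟩ :
            ↥(Fil (s + 1) k) ⧸ (Fil (s + 1 - 1) k).addSubgroupOf (Fil (s + 1) k)) = 0 := by
          apply (gradIso (s + 1) k).injective; rw [hz, map_zero]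
        rw [QuotientAddGroup.eq_zero_iff, AddSubgroup.mem_addSubgroupOf] at hxm
        have hx' : x ∈ Fil s k := by
          have h := hxm
          rw [show s + 1 - 1 = s from by ring] at h
          exact h
        exact ihinj x hx' hgx
      · intro y hy
        obtain ⟨q, hq⟩ := hbij.2 (gradIso' (s + 1) k (QuotientAddGroup.mk ⟨y, hy⟩))
        obtain ⟨w, rfl⟩ : ∃ w, gradIso (s + 1) k w = q := ⟨(gradIso (s + 1) k).symm q, by simp⟩
        induction w using QuotientAddGroup.induction_on with | H z =>
        obtain ⟨x, hx⟩ := z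
        have hgx' : g k x ∈ Fil' (s + 1) k := hgF _ _ _ hx
        rw [hgrad (s + 1) k x hx hgx'] at hq
        have h := (gradIso' (s + 1) k).injective hq
        rw [QuotientAddGroup.eq, AddSubgroup.mem_addSubgroupOf] at h
        have hdiff : -(g k x) + y ∈ Fil' s k := by
          have h2 : -(g k x) + y ∈ Fil' (s + 1 - 1) k := h
          rw [show s + 1 - 1 = s from by ring] at h2
          exact h2
        obtain ⟨z, hz, hgz⟩ := ihsurj _ hdiff
        refine ⟨x + z, (Fil (s + 1) k).add_mem hx (hFmono s k hz), ?_⟩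
        rw [map_add, hgz]; abel
  obtain ⟨hinj, hsurj⟩ := main (-1) (by omega) (by omega)
  constructor
  · rw [injective_iff_map_eq_zero]
    intro x hx
    exact hinj x (by rw [top]; trivial) hx
  · intro y
    obtain ⟨x, _, hx⟩ := hsurj y (by rw [top']; trivial)
    exact ⟨x, hx⟩
end
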